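/- arXiv:2302.08789 — 4 statements merged into one kernel-verified Lean document; each statement's English description precedes it below -/
import Mathlib

section
/- Let n ≥ 1, let α be a linear order, let f : ZMod n → α, and let L : ZMod n → Bool (L i = true meaning edge i of the cycle is non-counterflow). Suppose: (a) there exists i₀ with L i₀ = true; (b) for every i, if L i = true then f i < f (i + 1); and (c) for every i, if L i = false then L (i - 1) = true and f (i - 1) < f (i + 1). Then False. (This is the combinatorial core of the theorem that every cycle in the serialization graph of a schedule allowed under multiversion Read Committed must contain two adjacent counterflow dependencies or an ordered-counterflow pair.) -/
/-- Combinatorial core of the MVRC cycle theorem: given commit times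
`f : ZMod n → α` and edge labels `L` (`true` = non-counterflow), if some edge
is non-counterflow, every non-counterflow edge satisfies `f i < f (i+1)`, and
every counterflow edge `i` is preceded by a non-counterflow edge with
`f (i-1) < f (i+1)`, then we reach a contradiction. -/
theorem stmt_2 {α : Type*} [LinearOrder α] (n : ℕ) (hn : 1 ≤ n)
    (f : ZMod n → α) (L : ZMod n → Bool)
    (ha : ∃ i₀ : ZMod n, L i₀ = true)
    (hb : ∀ i : ZMod n, L i = true → f i < f (i + 1))
    (hc : ∀ i : ZMod n, L i = false → L (i - 1) = true ∧ f (i - 1) < f (i + 1)) :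
    False := by
  obtain ⟨i₀, hi₀⟩ := ha
  set F : ZMod n → α := fun j => if L j then f j else f (j - 1) with hF
  have step : ∀ j : ZMod n, F j ≤ F (j + 1) := by
    intro j
    rcases h1 : L j with _ | _
    · -- L j = false
      have h2 : L (j + 1) = true := by
        rcases h3 : L (j + 1) with _ | _
        · have := (hc (j + 1) h3).1
          simp only [add_sub_cancel_right] at this
          rw [this] at h1; exact absurd h1 (by simp)
        · rfl
      simp only [hF, h1, h2, if_true, Bool.false_eq_true, if_false]
      exact le_of_lt (hc j h1).2
    · -- L j = true
      rcases h2 : L (j + 1) with _ | _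
      · simp only [hF, h1, h2, if_true, Bool.false_eq_true, if_false,
          add_sub_cancel_right]
        exact le_refl _
      · simp only [hF, h1, h2, if_true]
        exact le_of_lt (hb j h1)
  have mono : ∀ (k : ℕ) (j : ZMod n), F j ≤ F (j + k) := by
    intro k
    induction k with
    | zero => simp
    | succ m ih =>
      intro j
      have : (j + (m + 1 : ℕ)) = (j + m) + 1 := by push_cast; ring
      rw [this]
      exact le_trans (ih j) (step (j + m))
  have hlt : F (i₀ - 1) < F i₀ := by
    rcases h1 : L (i₀ - 1) with _ | _
    · have h2 := (hc (i₀ - 1) h1).2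
      simp only [sub_add_cancel] at h2
      simpa only [hF, h1, hi₀, Bool.false_eq_true, if_false, if_true] using h2
    · have h2 := hb (i₀ - 1) h1
      simp only [sub_add_cancel] at h2
      simpa only [hF, h1, hi₀, if_true] using h2
  have hcast : ((n - 1 : ℕ) : ZMod n) = -1 := by
    rw [Nat.cast_sub hn, ZMod.natCast_self]
    simp
  have hle : F i₀ ≤ F (i₀ - 1) := by
    have := mono (n - 1) i₀
    rwa [hcast, ← sub_eq_add_neg] at this
  exact absurd (lt_of_le_of_lt hle hlt) (lt_irrefl _)
end

section
/- In a read-last-committed schedule, if a read operation b in transaction T_i observes a version of a tuple installed strictly before a version written by a write operation a in transaction T_j (an rw-antidependency) and this dependency is counterflow (c(T_j) < c(T_i)), then the read b occurs strictly before the commit of T_j. (Under MVRC, a counterflow rw-antidependency forces the read to precede the writer's commit.) -/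
/-- Under read-last-committed, a counterflow rw-antidependency forces the read
to precede the writer's commit. Here `Wtr` is the set of commit times of
transactions writing the tuple, `cTw` the commit time of the writer of the
version observed by the read `b` at time `tb`, read-last-committed says any
writer of the tuple committing before `tb` commits no later than `cTw`, the
version observed is installed strictly before the version written by `T_j`
(`cTw < cTj`), and the dependency is counterflow (`cTj < cTi`). Then
`tb < cTj`. -/
theorem stmt_10 {Time : Type*} [LinearOrder Time]
    (Wtr : Set Time) (cTi cTj cTw tb : Time)
    (hTjW : cTj ∈ Wtr)
    (hrlc : ∀ t ∈ Wtr, t < tb → t ≤ cTw)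
    (hinstall : cTw < cTj)
    (hcounterflow : cTj < cTi)
    (hreadT : tb < cTi)
    (hne : tb ≠ cTj) :
    tb < cTj := by
  rcases lt_trichotomy tb cTj with h | h | h
  · exact h
  · exact absurd h hne
  · exact absurd (hrlc cTj hTjW h) (not_le.mpr hinstall)
end

section
/- Consider a schedule without dirty writes in which transaction T_i contains a read operation b on tuple t immediately followed, within the same atomic chunk (hence with no interleaved operations of other transactions), by a write operation b' on t. Suppose transaction T_j (j ≠ i) contains a write operation a on t, and c(T_j) < c(T_i) (so that a potential rw-antidependency from b to a would be counterflow, forcing b to occur before C_j). Then the schedule exhibits a dirty write. (Hence a key-based or predicate-based update statement cannot be the source of a counterflow rw-antidependency in an MVRC schedule.) -/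
/-- If transaction `T_i` reads tuple `t` (operation `b`) immediately followed
within an atomic chunk by a write `b'` on `t`, transaction `T_j ≠ T_i` writes
`t` (operation `a`) with `c(T_j) < c(T_i)`, and (as forced by
read-last-committed for a counterflow rw-antidependency) `b` occurs before the
commit of `T_j`, then the schedule exhibits a dirty write. -/
theorem stmt_11 {Op ι Tup Time : Type*} [LinearOrder Time]
    (time : Op → Time) (htime : Function.Injective time)
    (tr : Op → ι) (commitOp : ι → Op)
    (isWrite isRead : Op → Prop) (tup : Op → Tup)
    (htrc : ∀ k : ι, tr (commitOp k) = k)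
    (hlast : ∀ o : Op, o ≠ commitOp (tr o) → time o < time (commitOp (tr o)))
    (Ti Tj : ι) (hij : Ti ≠ Tj)
    (b b' a : Op)
    (hb : tr b = Ti) (hb' : tr b' = Ti) (ha : tr a = Tj)
    (hRb : isRead b) (hWb' : isWrite b') (hWa : isWrite a)
    (htups : tup b = tup b') (htupa : tup b' = tup a)
    (hbb' : time b < time b')
    (hchunk : ∀ o : Op, time b < time o → time o < time b' → tr o = Ti)
    (hcf : time (commitOp Tj) < time (commitOp Ti))
    (hbCj : time b < time (commitOp Tj))
    (hnca : a ≠ commitOp Tj) (hncb' : b' ≠ commitOp Ti) (hncb : b ≠ commitOp Ti) :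
    ∃ w w' : Op, isWrite w ∧ isWrite w' ∧ tup w = tup w' ∧ tr w ≠ tr w' ∧
      time w < time w' ∧ time w' < time (commitOp (tr w)) := by
  have hCj : tr (commitOp Tj) = Tj := htrc Tj
  have haCj : time a < time (commitOp Tj) := by
    have h := hlast a (by rw [ha]; exact hnca); rwa [ha] at h
  rcases lt_trichotomy (time a) (time b') with h1 | h1 | h1
  · -- a before b'
    have hab : time a < time b := by
      rcases lt_trichotomy (time a) (time b) with h2 | h2 | h2
      · exact h2
      · exact absurd (by rw [← hb, ← htime h2, ha] : Ti = Tj) hij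
      · exact absurd ((ha ▸ hchunk a h2 h1 : Tj = Ti)).symm hij
    have hb'Cj : time b' < time (commitOp Tj) := by
      rcases lt_trichotomy (time b') (time (commitOp Tj)) with h2 | h2 | h2
      · exact h2
      · exact absurd ((hb' ▸ htime h2 ▸ hCj : Ti = Tj)).symm hij.symm
      · have := hchunk (commitOp Tj) hbCj h2
        rw [hCj] at this; exact absurd this.symm hij
    refine ⟨a, b', hWa, hWb', htupa.symm, ?_, ?_, ?_⟩
    · rw [ha, hb']; exact fun h => hij h.symm
    · exact h1
    · rw [ha]; exact hb'Cj
  · exact absurd ((hb' ▸ htime h1 ▸ ha : Ti = Tj)) hij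
  · -- b' before a
    refine ⟨b', a, hWb', hWa, htupa, ?_, h1, ?_⟩
    · rw [ha, hb']; exact hij
    · rw [hb']; exact haCj.trans hcf
end

section
/- Let A, B, C be lists over a type α, let k : ℕ, and let L = A ++ (List.replicate k B).join ++ C. For any two positions p, q < L.length there exists m ≤ min k 2 and a strictly monotone injection ι from the positions of L' = A ++ (List.replicate m B).join ++ C into the positions of L such that L'.get i = L.get (ι i) for every position i of L', and both p and q lie in the range of ι. (Unfolding each loop of a transaction program at most twice suffices to preserve any two designated operations, which underlies the fact that robustness of a set of BTPs is equivalent to robustness of their bounded unfoldings.) -/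
/-!
If `k` exceeds the number `n` of designated positions, then by pigeonhole one of the `k` copies
of `B` contains none of them. Deleting that copy embeds the list with `k - 1` copies into the
one with `k` copies as a subsequence whose range contains every position outside the deleted
copy, in particular all designated ones. Iterating and composing the embeddings brings `k`
down to at most `n`.
-/

open List

theorem Nat.exists_le_card_forall_notMem_Ico (a b : ℕ) (S : Finset ℕ) :
    ∃ j ≤ S.card, ∀ x ∈ S, x ∉ Set.Ico (a + j * b) (a + (j + 1) * b) := by
  obtain ⟨j, hj, hjS⟩ := Finset.exists_mem_notMem_of_card_lt_card
    (s := S.image fun x => (x - a) / b) (t := Finset.range (S.card + 1))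
    (by simpa using Finset.card_image_le.trans_lt (Nat.lt_succ_self _))
  refine ⟨j, Nat.lt_succ_iff.mp (Finset.mem_range.mp hj), fun x hx ⟨hlo, hhi⟩ => hjS ?_⟩
  exact Finset.mem_image.mpr ⟨x, hx, Nat.div_eq_of_lt_le (by omega) (by omega)⟩

section

variable {α : Type*}

def IsSubseqEmbedding (l' l : List α) (ι : Fin l'.length → Fin l.length) : Prop :=
  StrictMono ι ∧ ∀ i, l'.get i = l.get (ι i)

theorem isSubseqEmbedding_id (l : List α) : IsSubseqEmbedding l l id :=
  ⟨strictMono_id, fun _ => rfl⟩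

theorem IsSubseqEmbedding.comp {l'' l' l : List α} {ι : Fin l'.length → Fin l.length}
    {κ : Fin l''.length → Fin l'.length} (hι : IsSubseqEmbedding l' l ι)
    (hκ : IsSubseqEmbedding l'' l' κ) : IsSubseqEmbedding l'' l (ι ∘ κ) :=
  ⟨hι.1.comp hκ.1, fun i => (hκ.2 i).trans (hι.2 (κ i))⟩

theorem exists_isSubseqEmbedding_append_append (X Y Z : List α) :
    ∃ ι : Fin (X ++ Z).length → Fin (X ++ Y ++ Z).length,
      IsSubseqEmbedding _ _ ι ∧ ∀ x : Fin (X ++ Y ++ Z).length,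
        (x : ℕ) ∉ Set.Ico X.length (X.length + Y.length) → x ∈ Set.range ι := by
  refine ⟨fun i => ⟨if (i : ℕ) < X.length then i else i + Y.length, ?_⟩, ⟨?_, ?_⟩, ?_⟩
  · have := i.2
    simp only [length_append] at this ⊢
    split_ifs <;> omega
  · intro i j hij
    simp only [Fin.lt_def] at hij ⊢
    split_ifs <;> omega
  · intro i
    have := i.2
    simp only [length_append] at this
    simp only [get_eq_getElem, getElem_append, length_append]
    split_ifs <;> first | rfl | omega | (congr 1; omega)
  · intro x hx
    have hlen := x.2
    simp only [length_append, Set.mem_Ico, not_and_or, not_le, not_lt] at hlen hx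
    rcases hx with hx | hx
    · exact ⟨⟨x, by simp only [length_append]; omega⟩, by simp [hx]⟩
    · refine ⟨⟨x - Y.length, by simp only [length_append]; omega⟩, ?_⟩
      ext
      simp only
      split_ifs <;> omega

theorem flatten_replicate_succ_eq (B : List α) {j k : ℕ} (hj : j ≤ k) :
    (replicate (k + 1) B).flatten =
      (replicate j B).flatten ++ B ++ (replicate (k - j) B).flatten := by
  rw [show k + 1 = j + 1 + (k - j) by omega, replicate_add, replicate_add]
  simp

abbrev unrolled (A B C : List α) (k : ℕ) : List α :=
  A ++ (replicate k B).flatten ++ C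

theorem exists_isSubseqEmbedding_unrolled_succ (A B C : List α) {j k : ℕ} (hj : j ≤ k) :
    ∃ ι : Fin (unrolled A B C k).length → Fin (unrolled A B C (k + 1)).length,
      IsSubseqEmbedding _ _ ι ∧ ∀ x : Fin (unrolled A B C (k + 1)).length,
        (x : ℕ) ∉ Set.Ico (A.length + j * B.length) (A.length + (j + 1) * B.length) →
          x ∈ Set.range ι := by
  have hsucc : unrolled A B C (k + 1) =
      (A ++ (replicate j B).flatten) ++ B ++ ((replicate (k - j) B).flatten ++ C) := by
    simp [unrolled, flatten_replicate_succ_eq B hj]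
  have hk : unrolled A B C k =
      (A ++ (replicate j B).flatten) ++ ((replicate (k - j) B).flatten ++ C) := by
    obtain ⟨d, rfl⟩ := Nat.exists_eq_add_of_le hj
    rw [unrolled, replicate_add, flatten_append]
    simp
  rw [hsucc, hk]
  simpa [add_mul, add_assoc] using exists_isSubseqEmbedding_append_append
    (A ++ (replicate j B).flatten) B ((replicate (k - j) B).flatten ++ C)

theorem exists_isSubseqEmbedding_unrolled_of_card_le (A B C : List α) (k n : ℕ)
    (S : Finset (Fin (unrolled A B C k).length)) (hS : S.card ≤ n) :
    ∃ m ≤ min k n, ∃ ι : Fin (unrolled A B C m).length → Fin (unrolled A B C k).length,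
      IsSubseqEmbedding _ _ ι ∧ ↑S ⊆ Set.range ι := by
  induction k with
  | zero => exact ⟨0, by simp, id, isSubseqEmbedding_id _, by simp⟩
  | succ k ih =>
    by_cases hk : k + 1 ≤ n
    · exact ⟨k + 1, le_min le_rfl hk, id, isSubseqEmbedding_id _, by simp⟩
    obtain ⟨j, hjS, hj⟩ :=
      Nat.exists_le_card_forall_notMem_Ico A.length B.length (S.map Fin.valEmbedding)
    obtain ⟨ι, hι, hrange⟩ :=
      exists_isSubseqEmbedding_unrolled_succ A B C (j := j) (k := k) (by simp at hjS; omega)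
    have hcard : (Finset.univ.filter (ι · ∈ S)).card ≤ n :=
      (Finset.card_le_card_of_injOn ι (by intro i; simp) hι.1.injective.injOn).trans hS
    obtain ⟨m, hm, κ, hκ, hκS⟩ := ih _ hcard
    refine ⟨m, by omega, ι ∘ κ, hι.comp hκ, ?_⟩
    intro x hx
    obtain ⟨i, rfl⟩ := hrange x (hj x (Finset.mem_map_of_mem _ hx))
    obtain ⟨i', rfl⟩ := hκS (by simpa using hx)
    exact ⟨i', rfl⟩

end

/-- Unfolding each loop at most twice preserves any two designated operations:
if `L = A ++ (replicate k B).join ++ C`, then for any two positions `p, q` of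
`L` there is `m ≤ min k 2` such that `L' = A ++ (replicate m B).join ++ C`
embeds as a subsequence of `L` (via a strictly monotone position map preserving
entries) whose range contains `p` and `q`. -/
theorem stmt_12 {α : Type*} (A B C : List α) (k : ℕ)
    (p q : Fin (A ++ (List.replicate k B).flatten ++ C).length) :
    ∃ m ≤ min k 2,
      ∃ ι : Fin (A ++ (List.replicate m B).flatten ++ C).length →
            Fin (A ++ (List.replicate k B).flatten ++ C).length,
        StrictMono ι ∧
        (∀ i, (A ++ (List.replicate m B).flatten ++ C).get i =
              (A ++ (List.replicate k B).flatten ++ C).get (ι i)) ∧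
        (∃ i, ι i = p) ∧ (∃ i, ι i = q) := by
  obtain ⟨m, hm, ι, ⟨hmono, hget⟩, hpq⟩ :=
    exists_isSubseqEmbedding_unrolled_of_card_le A B C k 2 {p, q} Finset.card_le_two
  exact ⟨m, hm, ι, hmono, hget, hpq (by simp), hpq (by simp)⟩
end
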